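/- Let G be a group admitting an H-filtration {G_α} for a central subgroup H ≤ G. Then the amalgamated free product G *_H G (two copies of G amalgamated over H via the identity map) is residually finite. -/

import Mathlib

/-- A group is residually finite if every nontrivial element is avoided by some
finite-index normal subgroup. -/
def ResiduallyFinite (G : Type*) [Group G] : Prop :=
  ∀ g : G, g ≠ 1 → ∃ N : Subgroup G, N.Normal ∧ N.FiniteIndex ∧ g ∉ N

/-- The two-element family of groups `{G₁, G₂}`, used to form the amalgamated free
product `G₁ *_H G₂` as `Monoid.PushoutI`. -/
def fam (G₁ G₂ : Type u) : Bool → Type u := fun b => cond b G₁ G₂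

instance famGroup (G₁ G₂ : Type u) [Group G₁] [Group G₂] : ∀ b, Group (fam G₁ G₂ b)
  | true => inferInstanceAs (Group G₁)
  | false => inferInstanceAs (Group G₂)

/-- The pair of embeddings of the amalgamated subgroup into the two factors. -/
def famHom {H : Type*} {G₁ G₂ : Type u} [Group H] [Group G₁] [Group G₂]
    (f₁ : H →* G₁) (f₂ : H →* G₂) : ∀ b, H →* fam G₁ G₂ b
  | true => f₁
  | false => f₂

/-!
Write `x ≠ 1` in the amalgam in normal form `h · g₁ ⋯ gₙ` with `h ∈ H` and letters `gᵢ ∉ H`.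
If `n = 0` then `x = h`, and `h` survives in some finite quotient `G ⧸ G α` because the `G α`
intersect trivially. Otherwise `⋂ α, H ⊔ G α = H` yields a finite-index normal subgroup `K ⊇ H`
(normal because `H` is central) avoiding every `gᵢ`. Killing `H` maps `G *_H G` to the free
product `(G ⧸ K) * (G ⧸ K)`, where the image of `x` is the nonempty reduced word `ḡ₁ ⋯ ḡₙ`, hence
nontrivial.

Free products of finitely many finite groups are residually finite: on the finite set of reduced
words of length `≤ n`, let `M i` act as in the regular action on those words it cannot push
beyond length `n` (the `Admissible` ones, a set stable under `M i`) and fix the others. Applied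
to the empty word, a reduced word of length `n` acts as in the regular action, so it acts
nontrivially.
-/

theorem ResiduallyFinite.of_group {G : Type*} [Group G] (hG : Group.ResiduallyFinite G) :
    ResiduallyFinite G := fun g hg =>
  let ⟨N, hN⟩ := Group.exists_finiteIndexNormalSubgroup_notMem g hg
  ⟨N.toSubgroup, inferInstance, inferInstance, hN⟩

theorem Group.residuallyFinite_of_forall_exists_monoidHom.{u} {G : Type*} [Group G]
    (h : ∀ g : G, g ≠ 1 →
      ∃ (Q : Type u) (_ : Group Q) (_ : ResiduallyFinite Q) (f : G →* Q), f g ≠ 1) :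
    ResiduallyFinite G := by
  rw [residuallyFinite_iff_exists_finiteIndexNormalSubgroup]
  intro g hg
  obtain ⟨Q, _, _, f, hfg⟩ := h g hg
  obtain ⟨N, hN⟩ := exists_finiteIndexNormalSubgroup_notMem (f g) hfg
  exact ⟨N.comap f, hN⟩

theorem Subgroup.normal_of_le_center {G : Type*} [Group G] {H : Subgroup G}
    (h : H ≤ Subgroup.center G) : H.Normal :=
  ⟨fun a ha g => by rwa [Subgroup.mem_center_iff.mp (h ha) g, mul_inv_cancel_right]⟩

theorem Subgroup.exists_normal_finiteIndex_of_iInf_sup_eq {G : Type*} [Group G]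
    {H : Subgroup G} [H.Normal] {ι : Type*} {Gα : ι → Subgroup G}
    (hnorm : ∀ α, (Gα α).Normal) (hfi : ∀ α, (Gα α).FiniteIndex) (hfil : ⨅ α, (H ⊔ Gα α) = H)
    (S : Finset G) (hS : ∀ g ∈ S, g ∉ H) :
    ∃ K : Subgroup G, K.Normal ∧ K.FiniteIndex ∧ H ≤ K ∧ ∀ g ∈ S, g ∉ K := by
  have hsep : ∀ g : S, ∃ α, (g : G) ∉ H ⊔ Gα α := fun g => by
    by_contra! h
    exact hS g g.2 (hfil ▸ Subgroup.mem_iInf.mpr h)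
  choose α hα using hsep
  refine ⟨⨅ g : S, H ⊔ Gα (α g), Subgroup.normal_iInf_normal fun g => Subgroup.sup_normal _ _,
    Subgroup.finiteIndex_iInf fun g => Subgroup.finiteIndex_of_le le_sup_right,
    le_iInf fun _ => le_sup_left, fun g hg hK => hα ⟨g, hg⟩ (Subgroup.mem_iInf.mp hK _)⟩

def famId (G : Type u) [Group G] : ∀ b, fam G G b →* G
  | true => MonoidHom.id G
  | false => MonoidHom.id G

theorem famHom_injective {H : Type*} {G₁ G₂ : Type u} [Group H] [Group G₁] [Group G₂]
    {f₁ : H →* G₁} {f₂ : H →* G₂} (h₁ : Function.Injective f₁) (h₂ : Function.Injective f₂) :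
    ∀ b, Function.Injective (famHom f₁ f₂ b)
  | true => h₁
  | false => h₂

theorem famId_comp_famHom {G : Type u} [Group G] (H : Subgroup G) :
    ∀ b, (famId G b).comp (famHom H.subtype H.subtype b) = H.subtype
  | true => rfl
  | false => rfl

theorem mem_range_famHom_subtype_iff {G : Type u} [Group G] (H : Subgroup G) :
    ∀ {b : Bool} (g : fam G G b), g ∈ (famHom H.subtype H.subtype b).range ↔ famId G b g ∈ H
  | true, g | false, g => show g ∈ H.subtype.range ↔ (g : G) ∈ H by rw [H.range_subtype]

namespace Monoid.CoprodI.Word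

variable {ι : Type*} {M : ι → Type*} [∀ i, Group (M i)]

section Map

variable {N : ι → Type*} [∀ i, Group (N i)]

def map (f : ∀ i, M i →* N i) (w : Word M) (hf : ∀ l ∈ w.toList, f l.1 l.2 ≠ 1) : Word N where
  toList := w.toList.map fun l => ⟨l.1, f l.1 l.2⟩
  ne_one l hl := by
    obtain ⟨l', hl', rfl⟩ := List.mem_map.mp hl
    exact hf l' hl'
  chain_ne := List.isChain_map_of_isChain (fun l : Σ i, M i => (⟨l.1, f l.1 l.2⟩ : Σ i, N i))
    (fun _ _ h => h) w.chain_ne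

theorem prod_map (f : ∀ i, M i →* N i) (w : Word M) (hf : ∀ l ∈ w.toList, f l.1 l.2 ≠ 1) :
    (w.map f hf).prod = lift (fun i => of.comp (f i)) w.prod := by
  simp only [prod, map, map_list_prod, List.map_map]
  congr 2

theorem lift_prod_ne_one (f : ∀ i, M i →* N i) {w : Word M} (hw : w ≠ empty)
    (hf : ∀ l ∈ w.toList, f l.1 l.2 ≠ 1) : lift (fun i => of.comp (f i)) w.prod ≠ 1 := by
  classical
  rw [← prod_map f w hf]
  intro h
  have hmap : w.map f hf = empty := Word.equiv.symm.injective h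
  exact hw (Word.ext (List.map_eq_nil_iff.mp (congrArg Word.toList hmap :)))

end Map

abbrev BoundedWord (M : ι → Type*) [∀ i, Group (M i)] (n : ℕ) : Type _ :=
  {w : Word M // w.toList.length ≤ n}

instance [Finite ι] [∀ i, Finite (M i)] (n : ℕ) : Finite (BoundedWord M n) :=
  have : Finite {l : List (Σ i, M i) // l.length ≤ n} := (List.finite_length_le _ n).to_subtype
  Finite.of_injective (fun w : BoundedWord M n => (⟨w.1.toList, w.2⟩ : {l // l.length ≤ n}))
    fun _ _ h => Subtype.ext (Word.ext (congrArg Subtype.val h))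

def Admissible (n : ℕ) (i : ι) (w : Word M) : Prop :=
  w.toList.length < n ∨ w.fstIdx = some i

variable [∀ i, DecidableEq (M i)]

theorem length_rcons {i : ι} (p : Pair M i) :
    (rcons p).toList.length = p.tail.toList.length + if p.head = 1 then 0 else 1 := by
  unfold rcons
  split <;> simp [*]

theorem rcons_admissible {n : ℕ} {i : ι} (p : Pair M i) (hp : p.tail.toList.length < n) :
    (rcons p).toList.length ≤ n ∧ Admissible n i (rcons p) := by
  by_cases h : p.head = 1
  · rw [rcons, dif_pos h]
    exact ⟨hp.le, .inl hp⟩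
  · have := length_rcons p
    rw [if_neg h] at this
    refine ⟨by omega, .inr ?_⟩
    rw [rcons, dif_neg h, fstIdx_cons]

variable [DecidableEq ι]

theorem Admissible.length_tail_lt {n : ℕ} {i : ι} {w : Word M} (h : Admissible n i w)
    (hw : w.toList.length ≤ n) : (equivPair i w).tail.toList.length < n := by
  set p := equivPair i w
  have hwp : w = rcons p := by rw [← equivPair_symm, Equiv.symm_apply_apply]
  have hlen := length_rcons p
  rw [← hwp] at hlen
  rcases h with h | h
  · omega
  · have hhead : p.head ≠ 1 := by
      intro h1
      rw [hwp, rcons, dif_pos h1] at h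
      exact p.fstIdx_ne h
    rw [if_neg hhead] at hlen
    omega

theorem Admissible.smul {n : ℕ} {i : ι} {w : Word M} (h : Admissible n i w)
    (hw : w.toList.length ≤ n) (m : M i) :
    (m • w).toList.length ≤ n ∧ Admissible n i (m • w) :=
  rcons_admissible _ (h.length_tail_lt hw)

instance (n : ℕ) (i : ι) (w : Word M) : Decidable (Admissible n i w) := by
  unfold Admissible; infer_instance

def truncSMul (n : ℕ) (i : ι) (m : M i) (w : BoundedWord M n) : BoundedWord M n :=
  if h : Admissible n i w.1 then ⟨m • w.1, (h.smul w.2 m).1⟩ else w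

theorem truncSMul_one (n : ℕ) (i : ι) (w : BoundedWord M n) : truncSMul n i 1 w = w := by
  unfold truncSMul
  split
  · exact Subtype.ext (one_smul _ _)
  · rfl

theorem truncSMul_mul (n : ℕ) (i : ι) (m m' : M i) (w : BoundedWord M n) :
    truncSMul n i (m * m') w = truncSMul n i m (truncSMul n i m' w) := by
  unfold truncSMul
  by_cases h : Admissible n i w.1
  · rw [dif_pos h, dif_pos h, dif_pos (h.smul w.2 m').2]
    exact Subtype.ext (mul_smul _ _ _)
  · rw [dif_neg h, dif_neg h, dif_neg h]

def truncPermHom (n : ℕ) (i : ι) : M i →* Equiv.Perm (BoundedWord M n) where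
  toFun m :=
    { toFun := truncSMul n i m
      invFun := truncSMul n i m⁻¹
      left_inv w := by rw [← truncSMul_mul, inv_mul_cancel, truncSMul_one]
      right_inv w := by rw [← truncSMul_mul, mul_inv_cancel, truncSMul_one] }
  map_one' := Equiv.ext (truncSMul_one n i)
  map_mul' m m' := Equiv.ext (truncSMul_mul n i m m')

def truncAction (n : ℕ) : CoprodI M →* Equiv.Perm (BoundedWord M n) :=
  lift (truncPermHom n)

theorem truncAction_prod_empty {n : ℕ} (w : Word M) (hw : w.toList.length ≤ n) :
    truncAction n w.prod ⟨empty, Nat.zero_le n⟩ = ⟨w, hw⟩ := by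
  induction w using consRecOn with
  | empty => rfl
  | cons i m w hfst hm ih =>
    have hlt : w.toList.length < n := by simpa [cons] using hw
    rw [prod_cons, map_mul, Equiv.Perm.mul_apply, ih hlt.le, truncAction, lift_of]
    change truncSMul n i m ⟨w, hlt.le⟩ = _
    rw [truncSMul, dif_pos (.inl hlt)]
    exact Subtype.ext ((smul_eq_of_smul m w).trans (cons_eq_smul (h1 := hfst) (h2 := hm)).symm)

end Monoid.CoprodI.Word

namespace Monoid.CoprodI

open Word

instance residuallyFinite {ι : Type*} {M : ι → Type*} [∀ i, Group (M i)] [Finite ι]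
    [∀ i, Finite (M i)] : Group.ResiduallyFinite (CoprodI M) := by
  classical
  refine Group.residuallyFinite_of_forall_exists_finite_monoidHom fun g hg => ?_
  set w := Word.equiv g
  have hgw : w.prod = g := Word.equiv.symm_apply_apply g
  have hw : w ≠ empty := fun hw => hg (by rw [← hgw, hw, prod_empty])
  refine ⟨_, _, inferInstance, truncAction w.toList.length, fun h => hw ?_⟩
  have := truncAction_prod_empty w le_rfl
  rw [hgw, h] at this
  exact congrArg Subtype.val this.symm

end Monoid.CoprodI

namespace Monoid.PushoutI

open NormalWord

section

variable {ι : Type*} {G : ι → Type*} {H : Type*} [∀ i, Group (G i)] [Group H]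
  {φ : ∀ i, H →* G i}

theorem NormalWord.reduced {d : Transversal φ} (w : NormalWord d) : Reduced φ w.toWord := by
  rintro ⟨i, g⟩ hg hrange
  have hset : g ∈ d.set i := w.normalized i g hg
  have h1 := (d.compl i).equiv_snd_eq_self_of_mem_of_one_mem (Subgroup.one_mem _) hset
  rw [(d.compl i).equiv_snd_eq_one_of_mem_of_one_mem (d.one_mem i) hrange] at h1
  exact w.ne_one _ hg (congrArg Subtype.val h1).symm

theorem NormalWord.prod_eq_base {d : Transversal φ} (w : NormalWord d)
    (hw : w.toWord = .empty) : w.prod = base φ w.head := by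
  rw [NormalWord.prod, hw, CoprodI.Word.prod_empty, map_one, mul_one]

def toCoprodI {K : ι → Type*} [∀ i, Group (K i)] (f : ∀ i, G i →* K i)
    (hf : ∀ i, (f i).comp (φ i) = 1) : PushoutI φ →* CoprodI K :=
  lift (fun i => CoprodI.of.comp (f i)) 1 fun i => by
    rw [MonoidHom.comp_assoc, hf, MonoidHom.comp_one]

theorem toCoprodI_prod {K : ι → Type*} [∀ i, Group (K i)] (f : ∀ i, G i →* K i)
    (hf : ∀ i, (f i).comp (φ i) = 1) {d : Transversal φ} (w : NormalWord d) :
    toCoprodI f hf w.prod = CoprodI.lift (fun i => CoprodI.of.comp (f i)) w.toWord.prod := by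
  have hcomp : (toCoprodI f hf).comp ofCoprodI = CoprodI.lift fun i => CoprodI.of.comp (f i) :=
    CoprodI.ext_hom _ _ fun i => by
      ext g
      simp [toCoprodI, ofCoprodI_of]
  rw [NormalWord.prod, map_mul, toCoprodI, lift_base, MonoidHom.one_apply, one_mul, ← toCoprodI,
    ← hcomp, MonoidHom.comp_apply]

end

variable {G : Type u} [Group G] (H : Subgroup G)

def fold : PushoutI (famHom H.subtype H.subtype) →* G :=
  lift (famId G) H.subtype (famId_comp_famHom H)

theorem fold_base (h : H) : fold H (base _ h) = h :=
  lift_base _ _ _ _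

def toCoprodIQuotient (K : Subgroup G) [K.Normal] (hHK : H ≤ K) :
    PushoutI (famHom H.subtype H.subtype) →* CoprodI fun _ : Bool => G ⧸ K :=
  toCoprodI (fun b => (QuotientGroup.mk' K).comp (famId G b)) fun b => by
    ext h
    simpa [MonoidHom.comp_assoc, famId_comp_famHom] using hHK h.2

theorem NormalWord.famId_notMem {d : Transversal (famHom H.subtype H.subtype)}
    (w : NormalWord d) : ∀ l ∈ w.toList, famId G l.1 l.2 ∉ H := fun l hl =>
  mt (mem_range_famHom_subtype_iff H l.2).mpr (w.reduced l hl)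

theorem toCoprodIQuotient_prod_ne_one {K : Subgroup G} [K.Normal] (hHK : H ≤ K)
    {d : Transversal (famHom H.subtype H.subtype)} (w : NormalWord d) (hw : w.toWord ≠ .empty)
    (hK : ∀ l ∈ w.toList, famId G l.1 l.2 ∉ K) : toCoprodIQuotient H K hHK w.prod ≠ 1 := by
  rw [toCoprodIQuotient, toCoprodI_prod]
  exact CoprodI.Word.lift_prod_ne_one _ hw fun l hl => by
    simpa [QuotientGroup.eq_one_iff] using hK l hl

end Monoid.PushoutI

open Monoid.PushoutI NormalWord

/-- if `H ≤ G` is a central subgroup and `G` admits an `H`-filtration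
(a family of finite-index normal subgroups `G α` with trivial intersection and
`⋂ α, H·G α = H`), then the amalgamated free product `G *_H G` of two copies of `G`
over `H` (via the identity map) is residually finite. -/
theorem statement17 {G : Type u} [Group G] (H : Subgroup G)
    (hcent : H ≤ Subgroup.center G)
    {ι : Type*} (Gα : ι → Subgroup G)
    (hnorm : ∀ α, (Gα α).Normal) (hfi : ∀ α, (Gα α).FiniteIndex)
    (htriv : ⨅ α, Gα α = ⊥) (hfil : ⨅ α, (H ⊔ Gα α) = H) :
    ResiduallyFinite (Monoid.PushoutI (G := fam G G) (famHom H.subtype H.subtype)) := by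
  classical
  have := Subgroup.normal_of_le_center hcent
  obtain ⟨d⟩ := transversal_nonempty _ (famHom_injective H.subtype_injective H.subtype_injective)
  refine .of_group (Group.residuallyFinite_of_forall_exists_monoidHom fun x hx => ?_)
  obtain ⟨w, rfl⟩ : ∃ w : NormalWord d, w.prod = x := equiv.symm.surjective x
  by_cases hw : w.toWord = .empty
  · rw [w.prod_eq_base hw] at hx ⊢
    have hhead : w.head ≠ 1 := fun h => hx (by rw [h, map_one])
    obtain ⟨α, hα⟩ : ∃ α, (w.head : G) ∉ Gα α := by
      by_contra! h
      exact hhead (Subtype.ext (Subgroup.mem_bot.mp (htriv ▸ Subgroup.mem_iInf.mpr h)))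
    refine ⟨G ⧸ Gα α, _, inferInstance, (QuotientGroup.mk' _).comp (fold H), ?_⟩
    simpa [fold_base, QuotientGroup.eq_one_iff] using hα
  · obtain ⟨K, _, _, hHK, hK⟩ := Subgroup.exists_normal_finiteIndex_of_iInf_sup_eq hnorm hfi hfil
      (w.toList.map fun l : Σ b, fam G G b => famId G l.1 l.2).toFinset fun g hg => by
        obtain ⟨l, hl, rfl⟩ := List.mem_map.mp (List.mem_toFinset.mp hg)
        exact w.famId_notMem H l hl
    exact ⟨_, _, inferInstance, toCoprodIQuotient H K hHK, toCoprodIQuotient_prod_ne_one H hHK w hw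
      fun l hl => hK _ (List.mem_toFinset.mpr (List.mem_map_of_mem hl))⟩
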